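/- The ring homomorphism B(𝒢) → B^c(𝒢, S) induced by the coproduct-preserving strong monoidal functor X ↦ (X → S̄, constant at identities) is injective; i.e., the Burnside ring of a finite groupoid 𝒢 embeds into the crossed Burnside ring of any 𝒢-monoid S. -/

import Mathlib

open CategoryTheory

universe v u


section K0
variable (C : Type*) [Category C]

/-- The isomorphism class of an object. -/
def isoCl (X : C) : _root_.Quotient (isIsomorphicSetoid C) := Quotient.mk _ X

/-- The ideal of relations defining the Grothendieck ring `K₀(C, ⊔, ⊗)`:
`[X ⊔ Y] = [X] + [Y]`, `[X ⊗ Y] = [X]·[Y]` and `[unit] = 1`. -/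
noncomputable def k0Ideal (t c : C → C → C) (e : C) :
    Ideal (MvPolynomial (_root_.Quotient (isIsomorphicSetoid C)) ℤ) :=
  Ideal.span
    ((Set.range fun p : C × C =>
        MvPolynomial.X (isoCl C (c p.1 p.2)) - MvPolynomial.X (isoCl C p.1) -
          MvPolynomial.X (isoCl C p.2)) ∪
     (Set.range fun p : C × C =>
        MvPolynomial.X (isoCl C (t p.1 p.2)) -
          MvPolynomial.X (isoCl C p.1) * MvPolynomial.X (isoCl C p.2)) ∪
     {MvPolynomial.X (isoCl C e) - 1})

/-- The Grothendieck ring `K₀(C, ⊔, ⊗)` of a category equipped with a coproduct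
operation `c`, a tensor product operation `t` and a unit object `e`: the commutative
ring generated by the isomorphism classes of objects of `C` subject to the relations
`[X ⊔ Y] = [X] + [Y]`, `[X ⊗ Y] = [X]·[Y]` and `[e] = 1`.  Its underlying additive
group is the group completion of the monoid of isomorphism classes under `⊔`. -/
def K0 (t c : C → C → C) (e : C) : Type _ :=
  MvPolynomial (_root_.Quotient (isIsomorphicSetoid C)) ℤ ⧸ k0Ideal C t c e

noncomputable instance (t c : C → C → C) (e : C) : CommRing (K0 C t c e) :=
  inferInstanceAs
    (CommRing (MvPolynomial (_root_.Quotient (isIsomorphicSetoid C)) ℤ ⧸ k0Ideal C t c e))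

/-- The class of an object of `C` in the Grothendieck ring `K₀(C, ⊔, ⊗)`. -/
noncomputable def K0.of (t c : C → C → C) (e : C) (X : C) : K0 C t c e :=
  Ideal.Quotient.mk (k0Ideal C t c e) (MvPolynomial.X (isoCl C X))

end K0
section GSets
variable {G : Type u} [Groupoid.{v} G]

/-- Pointwise product of `𝒢`-sets. -/
@[simps] def prodF (X Y : G ⥤ FintypeCat.{v}) : G ⥤ FintypeCat.{v} where
  obj g := FintypeCat.of (X.obj g × Y.obj g)
  map h := FintypeCat.homMk fun p => (X.map h p.1, Y.map h p.2)
  map_id g := by apply FintypeCat.hom_ext; intro p; simp [FintypeCat.homMk] <;> rfl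
  map_comp f h := by apply FintypeCat.hom_ext; intro p; simp [FintypeCat.homMk] <;> rfl

/-- Pointwise coproduct (disjoint union) of `𝒢`-sets. -/
@[simps] def coprodF (X Y : G ⥤ FintypeCat.{v}) : G ⥤ FintypeCat.{v} where
  obj g := FintypeCat.of (X.obj g ⊕ Y.obj g)
  map h := FintypeCat.homMk fun p => Sum.map (X.map h) (Y.map h) p
  map_id g := by apply FintypeCat.hom_ext; intro p; cases p <;> simp [FintypeCat.homMk] <;> rfl
  map_comp f h := by apply FintypeCat.hom_ext; intro p; cases p <;> simp [FintypeCat.homMk] <;> rfl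

/-- The terminal `𝒢`-set. -/
def termF : G ⥤ FintypeCat.{v} := (Functor.const G).obj (FintypeCat.of PUnit)

end GSets

section Tensor
variable {G : Type u} [Groupoid.{v} G]
variable (Sb : G ⥤ FintypeCat.{v}) [∀ g : G, Monoid (Sb.obj g)]

/-- The tensor product of two crossed `𝒢`-sets over the `𝒢`-monoid with underlying
`𝒢`-set `Sb`: the underlying `𝒢`-set is the pointwise product, and the structure map
is `(x, y) ↦ θ(x) · τ(y)`. -/
def tensorOver
    (hmul : ∀ ⦃x y : G⦄ (h : x ⟶ y) (a b : Sb.obj x), Sb.map h (a * b) = Sb.map h a * Sb.map h b)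
    (u v : Over Sb) : Over Sb :=
  Over.mk (Y := prodF u.left v.left)
    { app := fun g => FintypeCat.homMk fun (p : (prodF u.left v.left).obj g) =>
        (show Sb.obj g from u.hom.app g p.1) * (show Sb.obj g from v.hom.app g p.2)
      naturality := by
        intro x y f
        apply FintypeCat.hom_ext; intro p
        have hu : (show Sb.obj y from u.hom.app y (u.left.map f p.1)) =
            Sb.map f (show Sb.obj x from u.hom.app x p.1) :=
          ConcreteCategory.congr_hom (u.hom.naturality f) p.1
        have hv : (show Sb.obj y from v.hom.app y (v.left.map f p.2)) =
            Sb.map f (show Sb.obj x from v.hom.app x p.2) :=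
          ConcreteCategory.congr_hom (v.hom.naturality f) p.2
        exact (congrArg₂ (· * ·) hu hv).trans (hmul f _ _).symm }

/-- The unit object: the terminal `𝒢`-set mapping to the identity elements of the
`𝒢`-monoid. -/
def unitOver
    (hone : ∀ ⦃x y : G⦄ (h : x ⟶ y), Sb.map h (1 : Sb.obj x) = 1) : Over Sb :=
  Over.mk (Y := termF)
    { app := fun g => FintypeCat.homMk fun _ => (1 : Sb.obj g)
      naturality := by
        intro x y f
        apply FintypeCat.hom_ext; intro p
        exact (hone f).symm }

/-- Coproducts in the category of crossed `𝒢`-sets. -/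
def coprodOver (u v : Over Sb) : Over Sb :=
  Over.mk (Y := coprodF u.left v.left)
    { app := fun g => FintypeCat.homMk fun p => Sum.elim (u.hom.app g) (v.hom.app g) p
      naturality := by intro x y f; apply FintypeCat.hom_ext; intro p; cases p with
        | inl a => exact ConcreteCategory.congr_hom (u.hom.naturality f) a
        | inr b => exact ConcreteCategory.congr_hom (v.hom.naturality f) b }

end Tensor

variable {G : Type u} [Groupoid.{v} G]
variable (Sb : G ⥤ FintypeCat.{v}) [∀ g : G, Monoid (Sb.obj g)]

/-- The functor `Set^𝒢 ⥤ Set^𝒢 / S̄` sending a `𝒢`-set `X` to the map `X → S̄`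
constant at the identity elements. -/
def FtoSlice (hone : ∀ ⦃x y : G⦄ (h : x ⟶ y), Sb.map h (1 : Sb.obj x) = 1) :
    (G ⥤ FintypeCat.{v}) ⥤ Over Sb where
  obj X := Over.mk (Y := X)
    { app := fun g => FintypeCat.homMk fun _ => (1 : Sb.obj g)
      naturality := by intro x y f; apply FintypeCat.hom_ext; intro a; exact (hone f).symm }
  map {X Y} θ := Over.homMk θ (by
    apply NatTrans.ext
    funext g
    rfl)
  map_id X := by
    apply CommaMorphism.ext <;> rfl
  map_comp f g := by
    apply CommaMorphism.ext <;> rfl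

/-- The Burnside ring `B(𝒢) = K₀(Set^𝒢, ⊔, ×)` of a finite groupoid `𝒢`. -/
noncomputable abbrev BurnsideRing (G : Type u) [Groupoid.{v} G] :=
  K0 (G ⥤ FintypeCat.{v}) prodF coprodF termF

/-- The crossed Burnside ring `B^c(𝒢, S) = K₀(Set^𝒢 / S̄, ⊔, ⊗)` of a `𝒢`-monoid. -/
noncomputable abbrev CrossedBurnsideRing
    (hmul : ∀ ⦃x y : G⦄ (h : x ⟶ y) (a b : Sb.obj x),
      Sb.map h (a * b) = Sb.map h a * Sb.map h b)
    (hone : ∀ ⦃x y : G⦄ (h : x ⟶ y), Sb.map h (1 : Sb.obj x) = 1) :=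
  K0 (Over Sb) (tensorOver Sb hmul) (coprodOver Sb) (unitOver Sb hone)

/-
The functor `X ↦ (X → S̄, constant at 1)` preserves `⊔`, `×` and the unit up to
isomorphism (since `1 · 1 = 1`), so it induces a ring map `B(𝒢) → B^c(𝒢, S)`. The
forgetful functor `Set^𝒢 / S̄ ⥤ Set^𝒢` preserves them strictly and is a retraction of it,
so it induces a left inverse on Grothendieck rings.
-/

namespace K0

variable {C : Type*} [Category C] {t c : C → C → C} {e : C}

lemma of_eq_of_iso {X Y : C} (i : X ≅ Y) : K0.of C t c e X = K0.of C t c e Y :=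
  congrArg (fun q => Ideal.Quotient.mk _ (MvPolynomial.X q))
    (@Quotient.sound _ (isIsomorphicSetoid C) X Y ⟨i⟩)

lemma of_coprod (X Y : C) :
    K0.of C t c e (c X Y) = K0.of C t c e X + K0.of C t c e Y :=
  ((Ideal.Quotient.eq (I := k0Ideal C t c e)).2 <| by
    rw [← sub_sub]
    exact Ideal.subset_span (Or.inl (Or.inl ⟨(X, Y), rfl⟩))).trans (map_add _ _ _)

lemma of_tensor (X Y : C) :
    K0.of C t c e (t X Y) = K0.of C t c e X * K0.of C t c e Y :=
  ((Ideal.Quotient.eq (I := k0Ideal C t c e)).2 <|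
    Ideal.subset_span (Or.inl (Or.inr ⟨(X, Y), rfl⟩))).trans (map_mul _ _ _)

lemma of_unit : K0.of C t c e e = 1 :=
  ((Ideal.Quotient.eq (I := k0Ideal C t c e)).2 <|
    Ideal.subset_span (Or.inr rfl)).trans (map_one _)

@[ext]
lemma ringHom_ext {R : Type*} [Semiring R] {f g : K0 C t c e →+* R}
    (h : ∀ X : C, f (K0.of C t c e X) = g (K0.of C t c e X)) : f = g := by
  refine Ideal.Quotient.ringHom_ext (MvPolynomial.ringHom_ext' (RingHom.ext_int _ _) ?_)
  intro q
  induction q using Quotient.inductionOn with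
  | h X => exact h X

variable {D : Type*} [Category D] {t' c' : D → D → D} {e' : D}

noncomputable def polyLift (F : C ⥤ D) :
    MvPolynomial (_root_.Quotient (isIsomorphicSetoid C)) ℤ →+* K0 D t' c' e' :=
  MvPolynomial.eval₂Hom (Int.castRingHom _)
    (Quotient.lift (fun X => K0.of D t' c' e' (F.obj X))
      fun _ _ ⟨i⟩ => of_eq_of_iso (F.mapIso i))

lemma polyLift_X (F : C ⥤ D) (X : C) :
    (polyLift F (MvPolynomial.X (isoCl C X)) : K0 D t' c' e') =
      K0.of D t' c' e' (F.obj X) :=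
  MvPolynomial.eval₂Hom_X' _ _ _

section Map

variable (F : C ⥤ D)
  (ht : ∀ X Y : C, Nonempty (F.obj (t X Y) ≅ t' (F.obj X) (F.obj Y)))
  (hc : ∀ X Y : C, Nonempty (F.obj (c X Y) ≅ c' (F.obj X) (F.obj Y)))
  (he : Nonempty (F.obj e ≅ e'))

noncomputable def map : K0 C t c e →+* K0 D t' c' e' :=
  Ideal.Quotient.lift _ (polyLift F) fun _ hp => by
    refine (Ideal.span_le (I := RingHom.ker (polyLift F))).2 ?_ hp
    rintro _ ((⟨⟨X, Y⟩, rfl⟩ | ⟨⟨X, Y⟩, rfl⟩) | rfl) <;>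
      simp only [SetLike.mem_coe, RingHom.mem_ker, map_sub, map_mul, map_one, polyLift_X,
        sub_eq_zero]
    · obtain ⟨i⟩ := hc X Y
      rw [of_eq_of_iso i, of_coprod, add_sub_cancel_left]
    · obtain ⟨i⟩ := ht X Y
      rw [of_eq_of_iso i, of_tensor]
    · obtain ⟨i⟩ := he
      rw [of_eq_of_iso i, of_unit]

lemma map_of (X : C) : map F ht hc he (K0.of C t c e X) = K0.of D t' c' e' (F.obj X) :=
  polyLift_X F X

end Map

lemma leftInverse_map_map {F : C ⥤ D} {F' : D ⥤ C}
    {ht : ∀ X Y : C, Nonempty (F.obj (t X Y) ≅ t' (F.obj X) (F.obj Y))}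
    {hc : ∀ X Y : C, Nonempty (F.obj (c X Y) ≅ c' (F.obj X) (F.obj Y))}
    {he : Nonempty (F.obj e ≅ e')}
    {ht' : ∀ X Y : D, Nonempty (F'.obj (t' X Y) ≅ t (F'.obj X) (F'.obj Y))}
    {hc' : ∀ X Y : D, Nonempty (F'.obj (c' X Y) ≅ c (F'.obj X) (F'.obj Y))}
    {he' : Nonempty (F'.obj e' ≅ e)}
    (hF : ∀ X : C, Nonempty (F'.obj (F.obj X) ≅ X)) :
    Function.LeftInverse (map F' ht' hc' he') (map F ht hc he) := by
  suffices (map F' ht' hc' he').comp (map F ht hc he) = RingHom.id _ from RingHom.congr_fun this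
  ext X
  rw [RingHom.comp_apply, map_of, map_of, RingHom.id_apply]
  exact of_eq_of_iso (hF X).some

end K0

namespace FtoSlice

variable (hmul : ∀ ⦃x y : G⦄ (h : x ⟶ y) (a b : Sb.obj x),
    Sb.map h (a * b) = Sb.map h a * Sb.map h b)
  (hone : ∀ ⦃x y : G⦄ (h : x ⟶ y), Sb.map h (1 : Sb.obj x) = 1)

def prodIso (X Y : G ⥤ FintypeCat.{v}) :
    (FtoSlice Sb hone).obj (prodF X Y) ≅
      tensorOver Sb hmul ((FtoSlice Sb hone).obj X) ((FtoSlice Sb hone).obj Y) :=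
  Over.isoMk (Iso.refl _) (by ext g p; exact mul_one (1 : Sb.obj g))

def coprodIso (X Y : G ⥤ FintypeCat.{v}) :
    (FtoSlice Sb hone).obj (coprodF X Y) ≅
      coprodOver Sb ((FtoSlice Sb hone).obj X) ((FtoSlice Sb hone).obj Y) :=
  Over.isoMk (Iso.refl _) (by ext g (p | p) <;> rfl)

def termIso : (FtoSlice Sb hone).obj termF ≅ unitOver Sb hone :=
  Over.isoMk (Iso.refl _) rfl

end FtoSlice

/-- The ring homomorphism `B(𝒢) → B^c(𝒢, S)` induced by the coproduct-preserving
strong monoidal functor `X ↦ (X → S̄, constant at identities)` is injective: the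
Burnside ring of a finite groupoid `𝒢` embeds into the crossed Burnside ring of any
`𝒢`-monoid `S`. -/
theorem burnsideRing_embeds_crossedBurnsideRing
    [Fintype G] [∀ x y : G, Fintype (x ⟶ y)]
    (hmul : ∀ ⦃x y : G⦄ (h : x ⟶ y) (a b : Sb.obj x),
      Sb.map h (a * b) = Sb.map h a * Sb.map h b)
    (hone : ∀ ⦃x y : G⦄ (h : x ⟶ y), Sb.map h (1 : Sb.obj x) = 1) :
    ∃ f : BurnsideRing G →+* CrossedBurnsideRing Sb hmul hone,
      (∀ X : G ⥤ FintypeCat.{v},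
        f (K0.of _ prodF coprodF termF X) =
          K0.of _ (tensorOver Sb hmul) (coprodOver Sb) (unitOver Sb hone)
            ((FtoSlice Sb hone).obj X)) ∧
      Function.Injective f :=
  ⟨K0.map (FtoSlice Sb hone) (fun X Y => ⟨FtoSlice.prodIso Sb hmul hone X Y⟩)
      (fun X Y => ⟨FtoSlice.coprodIso Sb hone X Y⟩) ⟨FtoSlice.termIso Sb hone⟩,
    K0.map_of _ _ _ _,
    (K0.leftInverse_map_map (F' := Over.forget Sb)
      (ht' := fun _ _ => ⟨Iso.refl _⟩) (hc' := fun _ _ => ⟨Iso.refl _⟩) (he' := ⟨Iso.refl _⟩)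
      fun _ => ⟨Iso.refl _⟩).injective⟩
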